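/- Let G = (V,E,w) be a weighted graph with nonnegative edge weights and total weight W = ∑_{e∈E} w_e > 0. Then PROD(G)/OPT(G) ≥ 1/3 + (2/3)·( W / (2W + ∑_{v∈V} max_{e incident to v} w_e) ). -/

import Mathlib

open Matrix Finset
noncomputable section

/-- Pauli `X` matrix. -/
def PX : Matrix (Fin 2) (Fin 2) ℂ := !![0, 1; 1, 0]
/-- Pauli `Y` matrix. -/
def PY : Matrix (Fin 2) (Fin 2) ℂ := !![0, -Complex.I; Complex.I, 0]
/-- Pauli `Z` matrix. -/
def PZ : Matrix (Fin 2) (Fin 2) ℂ := !![1, 0; 0, -1]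

/-- The one-qubit operator `P` acting on qubit `i` of an `n`-qubit system
(tensored with the identity on all other qubits), written as a matrix in the
computational basis `Fin n → Fin 2` of `(ℂ²)^{⊗n}`. -/
def pauliAt (n : ℕ) (i : Fin n) (P : Matrix (Fin 2) (Fin 2) ℂ) :
    Matrix (Fin n → Fin 2) (Fin n → Fin 2) ℂ :=
  fun x y => P (x i) (y i) * ∏ k ∈ Finset.univ.erase i, (if x k = y k then (1 : ℂ) else 0)

/-- The quantum Max Cut interaction term
`h_{ij} = (1/2)(I - X_i X_j - Y_i Y_j - Z_i Z_j)`. -/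
def hTerm (n : ℕ) (i j : Fin n) : Matrix (Fin n → Fin 2) (Fin n → Fin 2) ℂ :=
  (1 / 2 : ℂ) • (1 - pauliAt n i PX * pauliAt n j PX - pauliAt n i PY * pauliAt n j PY
      - pauliAt n i PZ * pauliAt n j PZ)

/-- The quantum Max Cut Hamiltonian `H_G = ∑_{{i,j} ∈ E} w_{ij} h_{ij}` of a weighted
graph `G` (with a symmetric weight function `w`).  The double sum ranges over ordered
pairs and hence counts every edge twice, whence the factor `1/2`. -/
def hamG (n : ℕ) (G : SimpleGraph (Fin n)) [DecidableRel G.Adj] (w : Fin n → Fin n → ℝ) :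
    Matrix (Fin n → Fin 2) (Fin n → Fin 2) ℂ :=
  (1 / 2 : ℂ) • ∑ i, ∑ j, if G.Adj i j then (w i j : ℂ) • hTerm n i j else 0

/-- The energy `⟨ψ|A|ψ⟩` of a (unit) vector `ψ`; for Hermitian `A` this is real, and we
take the real part. -/
def energy {m : Type} [Fintype m] (A : Matrix m m ℂ) (ψ : m → ℂ) : ℝ :=
  (star ψ ⬝ᵥ A *ᵥ ψ).re

/-- The maximum eigenvalue of a Hermitian matrix `A`, expressed as the supremum of the
energy `⟨ψ|A|ψ⟩` over unit vectors `ψ`. -/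
def maxEig {m : Type} [Fintype m] (A : Matrix m m ℂ) : ℝ :=
  sSup { r | ∃ ψ : m → ℂ, ∑ x, ‖ψ x‖ ^ 2 = 1 ∧ r = energy A ψ }

/-- The total edge weight `W = ∑_{e ∈ E} w_e` (the double sum counts every edge twice). -/
def totalW (n : ℕ) (G : SimpleGraph (Fin n)) [DecidableRel G.Adj] (w : Fin n → Fin n → ℝ) : ℝ :=
  (1 / 2 : ℝ) * ∑ i, ∑ j, if G.Adj i j then w i j else 0

/-- `max_{e ∈ E} w_e`: the largest edge weight of the graph (`0` if there are no edges;
for nonnegative weights this agrees with the maximum over the edge set). -/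
def maxEdgeW (n : ℕ) (G : SimpleGraph (Fin n)) [DecidableRel G.Adj]
    (w : Fin n → Fin n → ℝ) : ℝ :=
  (Finset.univ : Finset (Fin n × Fin n)).fold max 0
    fun p => if G.Adj p.1 p.2 then w p.1 p.2 else 0

/-- `max_{e ∋ v} w_e`: the largest weight of an edge incident to the vertex `v`
(taken to be `0` for an isolated vertex). -/
def maxIncident (n : ℕ) (G : SimpleGraph (Fin n)) [DecidableRel G.Adj]
    (w : Fin n → Fin n → ℝ) (v : Fin n) : ℝ :=
  (Finset.univ.filter fun j => G.Adj v j).fold max 0 (w v)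

/-- `OPT(G) = ‖H_G‖`, the maximum eigenvalue of the (positive semidefinite)
Hamiltonian `H_G`. -/
def OPTval (n : ℕ) (G : SimpleGraph (Fin n)) [DecidableRel G.Adj]
    (w : Fin n → Fin n → ℝ) : ℝ :=
  maxEig (hamG n G w)

/-- `PROD(G)`: the supremum of `⟨φ|H_G|φ⟩` over product states
`φ = φ_1 ⊗ φ_2 ⊗ ⋯ ⊗ φ_n`, each `φ_i` a normalized single-qubit state. -/
def PRODval (n : ℕ) (G : SimpleGraph (Fin n)) [DecidableRel G.Adj]
    (w : Fin n → Fin n → ℝ) : ℝ :=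
  sSup { r | ∃ f : Fin n → Fin 2 → ℂ, (∀ i, ∑ b, ‖f i b‖ ^ 2 = 1) ∧
    r = energy (hamG n G w) (fun x => ∏ i, f i (x i)) }

/-- The computational basis state `|z⟩`, as a vector in `(ℂ²)^{⊗n}`. -/
def basisVec (n : ℕ) (z : Fin n → Fin 2) : (Fin n → Fin 2) → ℂ :=
  fun x => if x = z then 1 else 0

/-!
Two upper bounds on `OPT` combine to the ratio.

Cut bound. `H_G + W = C_X + C_Y + C_Z`, where `C_P = ½ ∑ w_ij (1 - P_i P_j) / 2` is the classical
Max Cut Hamiltonian read in the eigenbasis of `P`. A product unitary `u^{⊗n}` with `u Z u* = P`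
conjugates `C_Z` to `C_P`, and `C_Z` is diagonal with the cut values as entries. Every cut value is
the energy of a computational basis state, which is a product state, so each `C_P ≤ PROD` and
`OPT ≤ 3 PROD - W`.

Star bound. For `v ∉ T` and `C = ∑_{j ∈ T} σ_v·σ_j`, the Pauli relations give
`C² = 3|T| - 2C + ∑_{j ≠ k} σ_j·σ_k`, and `σ_j·σ_k ≤ 1`. From `⟨C⟩² ≤ ⟨C²⟩` we get
`⟨C⟩ ≥ -|T| - 2`, so the unweighted star satisfies `∑_{j ∈ T} h_vj ≤ |T| + 1`. Peeling off the
smallest weight, one layer at a time, gives the weighted star bound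
`∑_j w_vj h_vj ≤ ∑_j w_vj + max_j w_vj`. Summing over `v` gives `OPT ≤ W + S / 2`, where
`S = ∑_v max_{e ∋ v} w_e`.

With `r = W / (2W + S)`, the inequalities `OPT / 3 ≤ PROD - W / 3` and `r · OPT ≤ W / 2` add up
to the claim.
-/

theorem Finset.sum_offDiag_swap {α M : Type*} [DecidableEq α] [AddCommMonoid M] (s : Finset α)
    (f : α × α → M) : ∑ p ∈ s.offDiag, f p.swap = ∑ p ∈ s.offDiag, f p := by
  refine sum_equiv (Equiv.prodComm α α) (fun p => ?_) fun _ _ => rfl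
  simp only [mem_offDiag, Equiv.prodComm_apply, Prod.fst_swap, Prod.snd_swap, ne_comm]
  tauto

/-- Layer cake: take the smallest weight off every weight and recurse on the rest of `T`. -/
theorem Finset.sum_mul_le_fold_max {ι : Type*} [DecidableEq ι] (f : ι → ℝ) (T : Finset ι)
    (hf : ∀ S ⊆ T, ∑ j ∈ S, f j ≤ 1) (ω : ι → ℝ) (hω : ∀ j ∈ T, 0 ≤ ω j) :
    ∑ j ∈ T, ω j * f j ≤ T.fold max 0 ω := by
  induction T using Finset.strongInduction generalizing ω with
  | H T ih =>
    rcases T.eq_empty_or_nonempty with rfl | hT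
    · simp
    obtain ⟨j₀, hj₀, hmin⟩ := exists_min_image T ω hT
    have hsplit : ∑ j ∈ T, ω j * f j
        = ω j₀ * ∑ j ∈ T, f j + ∑ j ∈ T.erase j₀, (ω j - ω j₀) * f j := by
      rw [sum_erase _ (by rw [sub_self, zero_mul]), mul_sum, ← sum_add_distrib]
      exact sum_congr rfl fun j _ => by ring
    have hrest := ih (T.erase j₀) (erase_ssubset hj₀)
      (fun S hS => hf S (hS.trans (erase_subset _ _))) (fun j => ω j - ω j₀)
      (fun j hj => sub_nonneg.2 (hmin j (mem_of_mem_erase hj)))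
    have hfold : (T.erase j₀).fold max 0 (fun j => ω j - ω j₀) ≤ T.fold max 0 ω - ω j₀ := by
      have hle : ∀ j ∈ T, ω j ≤ T.fold max 0 ω := fun j hj =>
        (le_fold_max _).2 (Or.inr ⟨j, hj, le_rfl⟩)
      exact (fold_max_le _).2 ⟨by linarith [hle j₀ hj₀],
        fun j hj => by linarith [hle j (mem_of_mem_erase hj)]⟩
    have hbottom := mul_le_mul_of_nonneg_left (hf T subset_rfl) (hω j₀ hj₀)
    linarith

theorem Fintype.sum_norm_sq_prod {ι κ : Type*} [Fintype ι] [DecidableEq ι] [Fintype κ]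
    (f : ι → κ → ℂ) (hf : ∀ i, ∑ b, ‖f i b‖ ^ 2 = 1) : ∑ x : ι → κ, ‖∏ i, f i (x i)‖ ^ 2 = 1 := by
  simp only [norm_prod, ← prod_pow]
  rw [← Fintype.prod_sum (fun i b => ‖f i b‖ ^ 2)]
  exact Finset.prod_eq_one fun i _ => hf i

theorem exists_unitary_conj_of_anticomm {A : Type*} [Ring A] [StarRing A] [Algebra ℝ A]
    [StarModule ℝ A] {P Z : A} (hP : IsSelfAdjoint P) (hZ : IsSelfAdjoint Z) (hPP : P * P = 1)
    (hZZ : Z * Z = 1) (hPZ : P * Z + Z * P = 0) : ∃ u ∈ unitary A, u * Z * star u = P := by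
  have hs : (√2)⁻¹ * (√2)⁻¹ = (1 / 2 : ℝ) := by
    rw [← mul_inv, Real.mul_self_sqrt zero_le_two, one_div]
  have hu : star ((√2)⁻¹ • (P + Z)) = (√2)⁻¹ • (P + Z) := by
    rw [star_smul, star_add, hP.star_eq, hZ.star_eq, star_trivial]
  have hsq : (P + Z) * (P + Z) = (2 : ℝ) • 1 := by
    rw [show (P + Z) * (P + Z) = P * P + Z * Z + (P * Z + Z * P) by noncomm_ring, hPP, hZZ, hPZ,
      add_zero, two_smul]
  have hsandwich : (P + Z) * Z * (P + Z) = (2 : ℝ) • P := by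
    rw [show (P + Z) * Z * (P + Z)
        = (P * Z + Z * P) * P - Z * (P * P) + P * (Z * Z) + Z * Z * P + Z * (Z * Z) by
      noncomm_ring, hPZ, hZZ, hPP, two_smul]
    noncomm_ring
  refine ⟨(√2)⁻¹ • (P + Z), ?_, ?_⟩
  · rw [Unitary.mem_iff, hu, smul_mul_smul_comm, hsq, hs, smul_smul, and_self]
    norm_num
  · rw [hu, smul_mul_assoc, smul_mul_assoc, mul_smul_comm, smul_smul, hs, hsandwich, smul_smul]
    norm_num

section TensorOp

variable {ι d R : Type*} [Fintype ι] [CommSemiring R]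

def tensorOp (f : ι → Matrix d d R) : Matrix (ι → d) (ι → d) R :=
  of fun x y => ∏ i, f i (x i) (y i)

theorem tensorOp_apply (f : ι → Matrix d d R) (x y : ι → d) :
    tensorOp f x y = ∏ i, f i (x i) (y i) := rfl

theorem tensorOp_mul [DecidableEq ι] [Fintype d] (f g : ι → Matrix d d R) :
    tensorOp f * tensorOp g = tensorOp (f * g) := by
  ext x y
  simp only [mul_apply, tensorOp_apply, Pi.mul_apply, ← prod_mul_distrib]
  exact (Fintype.prod_sum fun i j => f i (x i) j * g i j (y i)).symm

theorem tensorOp_one [DecidableEq ι] [DecidableEq d] : tensorOp (1 : ι → Matrix d d R) = 1 := by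
  ext x y
  simp only [tensorOp_apply, Pi.one_apply, one_apply, prod_ite_zero, prod_const_one,
    mem_univ, true_imp_iff, funext_iff]

theorem tensorOp_diagonal [DecidableEq ι] [DecidableEq d] (e : ι → d → R) :
    tensorOp (fun i => diagonal (e i)) = diagonal fun x => ∏ i, e i (x i) := by
  ext x y
  simp only [tensorOp_apply, diagonal_apply, prod_ite_zero, mem_univ, true_imp_iff, funext_iff]

theorem tensorOp_conjTranspose [StarRing R] (f : ι → Matrix d d R) :
    (tensorOp f)ᴴ = tensorOp fun i => (f i)ᴴ := by
  ext x y
  simp [tensorOp_apply, star_prod]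

end TensorOp

theorem tensorOp_mem_unitary {ι d : Type*} [Fintype ι] [DecidableEq ι] [Fintype d] [DecidableEq d]
    {f : ι → Matrix d d ℂ} (hf : ∀ i, f i ∈ unitary (Matrix d d ℂ)) :
    tensorOp f ∈ unitary (Matrix (ι → d) (ι → d) ℂ) := by
  have h₁ : (fun i => (f i)ᴴ) * f = 1 := funext fun i => (Unitary.mem_iff.1 (hf i)).1
  have h₂ : f * (fun i => (f i)ᴴ) = 1 := funext fun i => (Unitary.mem_iff.1 (hf i)).2
  rw [Unitary.mem_iff, star_eq_conjTranspose, tensorOp_conjTranspose, tensorOp_mul, tensorOp_mul,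
    h₁, h₂, tensorOp_one, and_self]

section PauliAt

variable {n : ℕ}

theorem pauliAt_eq_tensorOp (i : Fin n) (P : Matrix (Fin 2) (Fin 2) ℂ) :
    pauliAt n i P = tensorOp (Pi.mulSingle i P) := by
  ext x y
  rw [pauliAt, tensorOp_apply, ← mul_prod_erase univ _ (mem_univ i), Pi.mulSingle_eq_same]
  congr 1
  refine prod_congr rfl fun k hk => ?_
  rw [Pi.mulSingle_eq_of_ne (ne_of_mem_erase hk), one_apply]

theorem pauliAt_mul_pauliAt_self (i : Fin n) (P Q : Matrix (Fin 2) (Fin 2) ℂ) :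
    pauliAt n i P * pauliAt n i Q = pauliAt n i (P * Q) := by
  rw [pauliAt_eq_tensorOp, pauliAt_eq_tensorOp, pauliAt_eq_tensorOp, tensorOp_mul,
    Pi.mulSingle_mul]

theorem pauliAt_commute {i j : Fin n} (hij : i ≠ j) (P Q : Matrix (Fin 2) (Fin 2) ℂ) :
    Commute (pauliAt n i P) (pauliAt n j Q) := by
  rw [pauliAt_eq_tensorOp, pauliAt_eq_tensorOp, Commute, SemiconjBy, tensorOp_mul, tensorOp_mul]
  exact congrArg tensorOp
    (Pi.mulSingle_commute (f := fun _ => Matrix (Fin 2) (Fin 2) ℂ) hij P Q).eq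

theorem pauliAt_mul_mul_mul_comm {v j k : Fin n} (hvj : v ≠ j)
    (P Q P' Q' : Matrix (Fin 2) (Fin 2) ℂ) :
    pauliAt n v P * pauliAt n j Q * (pauliAt n v P' * pauliAt n k Q')
      = pauliAt n v (P * P') * (pauliAt n j Q * pauliAt n k Q') := by
  rw [← pauliAt_mul_pauliAt_self, mul_assoc, mul_assoc, ← mul_assoc (pauliAt n j Q),
    (pauliAt_commute hvj.symm Q P').eq, mul_assoc]

theorem pauliAt_one (i : Fin n) : pauliAt n i 1 = 1 := by
  rw [pauliAt_eq_tensorOp, Pi.mulSingle_one, tensorOp_one]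

theorem pauliAt_add (i : Fin n) (P Q : Matrix (Fin 2) (Fin 2) ℂ) :
    pauliAt n i (P + Q) = pauliAt n i P + pauliAt n i Q := by
  ext x y
  simp [pauliAt, add_mul]

theorem pauliAt_smul (i : Fin n) (c : ℂ) (P : Matrix (Fin 2) (Fin 2) ℂ) :
    pauliAt n i (c • P) = c • pauliAt n i P := by
  ext x y
  simp [pauliAt, mul_assoc]

theorem pauliAt_conjTranspose (i : Fin n) (P : Matrix (Fin 2) (Fin 2) ℂ) :
    (pauliAt n i P)ᴴ = pauliAt n i Pᴴ := by
  rw [pauliAt_eq_tensorOp, pauliAt_eq_tensorOp, tensorOp_conjTranspose]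
  congr 1
  funext k
  exact Pi.apply_mulSingle (fun _ M => Mᴴ) (fun _ => conjTranspose_one) i P k

theorem pauliAt_diagonal (i : Fin n) (e : Fin 2 → ℂ) :
    pauliAt n i (diagonal e) = diagonal fun x => e (x i) := by
  have h : Pi.mulSingle i (diagonal e) = fun k => diagonal ((Pi.mulSingle i e : Fin n → _) k) :=
    funext fun k => (Pi.apply_mulSingle (fun _ => diagonal) (fun _ => diagonal_one) i e k).symm
  rw [pauliAt_eq_tensorOp, h, tensorOp_diagonal]
  congr 1
  funext x
  rw [Fintype.prod_eq_single i fun k hk => by rw [Pi.mulSingle_eq_of_ne hk, Pi.one_apply],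
    Pi.mulSingle_eq_same]

theorem pauliAt_mul_pauliAt_apply_self {i j : Fin n} (hij : i ≠ j)
    (P Q : Matrix (Fin 2) (Fin 2) ℂ) (x : Fin n → Fin 2) :
    (pauliAt n i P * pauliAt n j Q) x x = P (x i) (x i) * Q (x j) (x j) := by
  rw [pauliAt_eq_tensorOp, pauliAt_eq_tensorOp, tensorOp_mul, tensorOp_apply,
    Fintype.prod_eq_mul i j hij fun k hk => by simp [Pi.mulSingle_eq_of_ne hk.1,
      Pi.mulSingle_eq_of_ne hk.2]]
  simp [Pi.mulSingle_eq_of_ne hij, Pi.mulSingle_eq_of_ne hij.symm]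

theorem tensorOp_const_conj_pauliAt {u : Matrix (Fin 2) (Fin 2) ℂ} (hu : u ∈ unitary _)
    (i : Fin n) (P : Matrix (Fin 2) (Fin 2) ℂ) :
    tensorOp (fun _ => u) * pauliAt n i P * star (tensorOp fun _ => u)
      = pauliAt n i (u * P * star u) := by
  rw [star_eq_conjTranspose, tensorOp_conjTranspose, pauliAt_eq_tensorOp, pauliAt_eq_tensorOp,
    tensorOp_mul, tensorOp_mul]
  congr 1
  funext k
  by_cases hk : k = i
  · subst hk; simp [star_eq_conjTranspose]
  · simp [Pi.mulSingle_eq_of_ne hk, ← star_eq_conjTranspose, Unitary.mul_star_self_of_mem hu]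

end PauliAt

section Energy

variable {m : Type} [Fintype m]

theorem star_dotProduct_self (ψ : m → ℂ) : star ψ ⬝ᵥ ψ = ((∑ x, ‖ψ x‖ ^ 2 : ℝ) : ℂ) := by
  simp [dotProduct, Complex.conj_mul']

theorem energy_add (A B : Matrix m m ℂ) (ψ : m → ℂ) :
    energy (A + B) ψ = energy A ψ + energy B ψ := by
  simp [energy, add_mulVec]

theorem energy_sub (A B : Matrix m m ℂ) (ψ : m → ℂ) :
    energy (A - B) ψ = energy A ψ - energy B ψ := by
  simp [energy, sub_mulVec]

theorem energy_ofReal_smul (r : ℝ) (A : Matrix m m ℂ) (ψ : m → ℂ) :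
    energy ((r : ℂ) • A) ψ = r * energy A ψ := by
  simp [energy, smul_mulVec]

theorem energy_sum {ι : Type*} (s : Finset ι) (A : ι → Matrix m m ℂ) (ψ : m → ℂ) :
    energy (∑ i ∈ s, A i) ψ = ∑ i ∈ s, energy (A i) ψ :=
  map_sum (AddMonoidHom.mk' (energy · ψ) fun A B => energy_add A B ψ) A s

theorem energy_nsmul (k : ℕ) (A : Matrix m m ℂ) (ψ : m → ℂ) :
    energy (k • A) ψ = k * energy A ψ :=
  (map_nsmul (AddMonoidHom.mk' (energy · ψ) fun A B => energy_add A B ψ) k A).trans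
    (nsmul_eq_mul _ _)

theorem energy_one [DecidableEq m] (ψ : m → ℂ) :
    energy (1 : Matrix m m ℂ) ψ = ∑ x, ‖ψ x‖ ^ 2 := by
  rw [energy, one_mulVec, star_dotProduct_self, Complex.ofReal_re]

theorem energy_conjTranspose_mul_self (A : Matrix m m ℂ) (ψ : m → ℂ) :
    energy (Aᴴ * A) ψ = ∑ x, ‖(A *ᵥ ψ) x‖ ^ 2 := by
  rw [energy, ← mulVec_mulVec, dotProduct_mulVec, ← star_mulVec, star_dotProduct_self,
    Complex.ofReal_re]

theorem energy_conj (U A : Matrix m m ℂ) (ψ : m → ℂ) :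
    energy (U * A * Uᴴ) ψ = energy A (Uᴴ *ᵥ ψ) := by
  rw [energy, energy, star_mulVec, conjTranspose_conjTranspose, ← mulVec_mulVec, ← mulVec_mulVec,
    dotProduct_mulVec]

theorem sum_norm_sq_conjTranspose_mulVec [DecidableEq m] {U : Matrix m m ℂ} (hU : U * Uᴴ = 1)
    (ψ : m → ℂ) : ∑ x, ‖(Uᴴ *ᵥ ψ) x‖ ^ 2 = ∑ x, ‖ψ x‖ ^ 2 := by
  rw [← energy_conjTranspose_mul_self, conjTranspose_conjTranspose, hU, energy_one]

theorem sq_energy_le_energy_mul_self [DecidableEq m] {A : Matrix m m ℂ} (hA : A.IsHermitian)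
    {ψ : m → ℂ} (hψ : ∑ x, ‖ψ x‖ ^ 2 = 1) : energy A ψ ^ 2 ≤ energy (A * A) ψ := by
  set c := energy A ψ
  have hB : (A - (c : ℂ) • 1)ᴴ = A - (c : ℂ) • 1 := by
    simp [conjTranspose_sub, hA.eq, conjTranspose_smul]
  have hvar : 0 ≤ energy ((A - (c : ℂ) • 1)ᴴ * (A - (c : ℂ) • 1)) ψ := by
    rw [energy_conjTranspose_mul_self]; positivity
  have hsq : (A - (c : ℂ) • 1) * (A - (c : ℂ) • 1)
      = A * A - ((2 * c : ℝ) : ℂ) • A + ((c ^ 2 : ℝ) : ℂ) • 1 := by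
    push_cast
    simp only [sub_mul, mul_sub, mul_smul_comm, smul_mul_assoc, one_mul, mul_one]
    module
  rw [hB, hsq, energy_add, energy_sub, energy_ofReal_smul, energy_ofReal_smul, energy_one, hψ]
    at hvar
  nlinarith

theorem energy_diagonal [DecidableEq m] (e : m → ℝ) (ψ : m → ℂ) :
    energy (diagonal fun x => (e x : ℂ)) ψ = ∑ x, e x * ‖ψ x‖ ^ 2 := by
  simp [energy, dotProduct, mulVec_diagonal, mul_left_comm _ (e _ : ℂ), Complex.conj_mul',
    ← Complex.ofReal_pow]

theorem energy_single [DecidableEq m] (A : Matrix m m ℂ) (z : m) :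
    energy A (Pi.single z 1) = (A z z).re := by
  simp [energy, mulVec_single, single_dotProduct]

theorem maxEig_le [DecidableEq m] [Nonempty m] {A : Matrix m m ℂ} {c : ℝ}
    (h : ∀ ψ : m → ℂ, ∑ x, ‖ψ x‖ ^ 2 = 1 → energy A ψ ≤ c) : maxEig A ≤ c := by
  refine csSup_le ⟨_, Pi.single (Classical.arbitrary m) 1, ?_, rfl⟩ fun r ⟨ψ, hψ, hr⟩ => hr ▸ h ψ hψ
  simp [Pi.single_apply, apply_ite]

end Energy

theorem PX_mul_PX : PX * PX = 1 := by ext i j; fin_cases i <;> fin_cases j <;> simp [PX, mul_apply]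
theorem PY_mul_PY : PY * PY = 1 := by ext i j; fin_cases i <;> fin_cases j <;> simp [PY, mul_apply]
theorem PZ_mul_PZ : PZ * PZ = 1 := by ext i j; fin_cases i <;> fin_cases j <;> simp [PZ, mul_apply]
theorem PX_mul_PY : PX * PY = Complex.I • PZ := by
  ext i j; fin_cases i <;> fin_cases j <;> simp [PX, PY, PZ, mul_apply]
theorem PY_mul_PX : PY * PX = -Complex.I • PZ := by
  ext i j; fin_cases i <;> fin_cases j <;> simp [PX, PY, PZ, mul_apply]
theorem PY_mul_PZ : PY * PZ = Complex.I • PX := by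
  ext i j; fin_cases i <;> fin_cases j <;> simp [PX, PY, PZ, mul_apply]
theorem PZ_mul_PY : PZ * PY = -Complex.I • PX := by
  ext i j; fin_cases i <;> fin_cases j <;> simp [PX, PY, PZ, mul_apply]
theorem PZ_mul_PX : PZ * PX = Complex.I • PY := by
  ext i j; fin_cases i <;> fin_cases j <;> simp [PX, PY, PZ, mul_apply]
theorem PX_mul_PZ : PX * PZ = -Complex.I • PY := by
  ext i j; fin_cases i <;> fin_cases j <;> simp [PX, PY, PZ, mul_apply]

theorem PZ_eq_diagonal : PZ = diagonal ![1, -1] := by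
  ext i j; fin_cases i <;> fin_cases j <;> simp [PZ]

def pauli : Fin 3 → Matrix (Fin 2) (Fin 2) ℂ := ![PX, PY, PZ]

theorem pauli_isHermitian (a : Fin 3) : (pauli a).IsHermitian := by
  fin_cases a <;> ext i j <;> fin_cases i <;> fin_cases j <;> simp [pauli, PX, PY, PZ]

theorem pauli_mul_self (a : Fin 3) : pauli a * pauli a = 1 := by
  fin_cases a
  exacts [PX_mul_PX, PY_mul_PY, PZ_mul_PZ]

theorem pauli_anticomm (a b : Fin 3) :
    pauli a * pauli b + pauli b * pauli a = (if a = b then 2 else 0 : ℂ) • 1 := by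
  fin_cases a <;> fin_cases b <;>
    simp [pauli, PX_mul_PX, PY_mul_PY, PZ_mul_PZ, PX_mul_PY, PY_mul_PX, PY_mul_PZ, PZ_mul_PY,
      PZ_mul_PX, PX_mul_PZ, two_smul]

theorem exists_unitary_conj_PZ (a : Fin 3) :
    ∃ u ∈ unitary (Matrix (Fin 2) (Fin 2) ℂ), u * PZ * star u = pauli a := by
  by_cases ha : a = 2
  · exact ⟨1, one_mem _, by simp [ha, pauli]⟩
  · exact exists_unitary_conj_of_anticomm (pauli_isHermitian a).isSelfAdjoint
      (pauli_isHermitian 2).isSelfAdjoint (pauli_mul_self a) (pauli_mul_self 2)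
      (by rw [show PZ = pauli 2 from rfl, pauli_anticomm, if_neg ha, zero_smul])

section PauliDot

variable {n : ℕ}

def pauliDot (n : ℕ) (i j : Fin n) : Matrix (Fin n → Fin 2) (Fin n → Fin 2) ℂ :=
  ∑ a, pauliAt n i (pauli a) * pauliAt n j (pauli a)

theorem hTerm_eq_pauliDot (i j : Fin n) : hTerm n i j = (1 / 2 : ℂ) • (1 - pauliDot n i j) := by
  simp only [hTerm, pauliDot, Fin.sum_univ_three, pauli, cons_val_zero, cons_val_one, cons_val_two,
    tail_cons, head_cons, sub_sub]

theorem pauliDot_isHermitian {i j : Fin n} (hij : i ≠ j) : (pauliDot n i j).IsHermitian :=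
  isHermitian_iff_isSelfAdjoint.2 <| isSelfAdjoint_sum _ fun a _ => by
    rw [← isHermitian_iff_isSelfAdjoint, IsHermitian, conjTranspose_mul, pauliAt_conjTranspose,
      pauliAt_conjTranspose, (pauli_isHermitian a).eq, (pauliAt_commute hij _ _).eq]

theorem pauliDot_mul_self {i j : Fin n} (hij : i ≠ j) :
    pauliDot n i j * pauliDot n i j = 3 • 1 - 2 • pauliDot n i j := by
  simp only [pauliDot, sum_mul_sum, pauliAt_mul_mul_mul_comm hij, pauliAt_mul_pauliAt_self]
  simp only [Fin.sum_univ_three, pauli, cons_val_zero, cons_val_one, cons_val_two, tail_cons,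
    head_cons, PX_mul_PX, PY_mul_PY, PZ_mul_PZ, PX_mul_PY, PY_mul_PX, PY_mul_PZ, PZ_mul_PY,
    PZ_mul_PX, PX_mul_PZ, pauliAt_smul, pauliAt_one, smul_mul_smul_comm, one_mul]
  simp only [neg_mul_neg, Complex.I_mul_I]
  module

theorem pauliDot_anticomm {v j k : Fin n} (hvj : v ≠ j) (hvk : v ≠ k) (hjk : j ≠ k) :
    pauliDot n v j * pauliDot n v k + pauliDot n v k * pauliDot n v j
      = (2 : ℂ) • pauliDot n j k := by
  simp only [pauliDot, sum_mul_sum, pauliAt_mul_mul_mul_comm hvj, pauliAt_mul_mul_mul_comm hvk]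
  rw [sum_comm (s := univ) (t := univ) (f := fun a b =>
    pauliAt n v (pauli a * pauli b) * (pauliAt n k (pauli a) * pauliAt n j (pauli b)))]
  simp only [← sum_add_distrib, (pauliAt_commute hjk.symm _ _).eq, ← add_mul, ← pauliAt_add,
    pauli_anticomm, pauliAt_smul, pauliAt_one, smul_mul, one_mul]
  simp only [ite_smul, zero_smul, sum_ite_eq, mem_univ, if_true, smul_sum]

theorem energy_pauliDot_le {i j : Fin n} (hij : i ≠ j) {ψ : (Fin n → Fin 2) → ℂ}
    (hψ : ∑ x, ‖ψ x‖ ^ 2 = 1) : energy (pauliDot n i j) ψ ≤ 1 := by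
  have hsq : (1 - pauliDot n i j)ᴴ * (1 - pauliDot n i j) = 4 • (1 - pauliDot n i j) := by
    rw [conjTranspose_sub, conjTranspose_one, (pauliDot_isHermitian hij).eq]
    simp only [sub_mul, mul_sub, one_mul, mul_one, pauliDot_mul_self hij]
    module
  have h := energy_conjTranspose_mul_self (1 - pauliDot n i j) ψ
  rw [hsq, energy_nsmul, energy_sub, energy_one, hψ, Nat.cast_ofNat] at h
  have : 0 ≤ ∑ x, ‖((1 - pauliDot n i j) *ᵥ ψ) x‖ ^ 2 := by positivity
  linarith

theorem energy_hTerm (i j : Fin n) {ψ : (Fin n → Fin 2) → ℂ} (hψ : ∑ x, ‖ψ x‖ ^ 2 = 1) :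
    energy (hTerm n i j) ψ = (1 - energy (pauliDot n i j) ψ) / 2 := by
  rw [hTerm_eq_pauliDot, show (1 / 2 : ℂ) = ((1 / 2 : ℝ) : ℂ) by norm_num, energy_ofReal_smul,
    energy_sub, energy_one, hψ]
  ring

end PauliDot

section StarBound

variable {n : ℕ}

theorem sum_pauliDot_mul_self {v : Fin n} {T : Finset (Fin n)} (hv : v ∉ T) :
    (∑ j ∈ T, pauliDot n v j) * (∑ j ∈ T, pauliDot n v j)
      = (3 * #T) • 1 - 2 • (∑ j ∈ T, pauliDot n v j) + ∑ p ∈ T.offDiag, pauliDot n p.1 p.2 := by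
  have hvT : ∀ j ∈ T, v ≠ j := fun j hj h => hv (h ▸ hj)
  have hdiag : ∑ j ∈ T, pauliDot n v j * pauliDot n v j
      = (3 * #T) • 1 - 2 • (∑ j ∈ T, pauliDot n v j) := by
    rw [sum_congr rfl fun j hj => pauliDot_mul_self (hvT j hj), sum_sub_distrib, sum_const,
      smul_sum, smul_smul, mul_comm]
  have hoff : ∑ p ∈ T.offDiag, pauliDot n v p.1 * pauliDot n v p.2
      = ∑ p ∈ T.offDiag, pauliDot n p.1 p.2 := by
    have hsym : ∑ p ∈ T.offDiag, (pauliDot n v p.1 * pauliDot n v p.2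
          + pauliDot n v p.2 * pauliDot n v p.1) = ∑ p ∈ T.offDiag, (2 : ℂ) • pauliDot n p.1 p.2 :=
      sum_congr rfl fun p hp => by
        obtain ⟨hj, hk, hjk⟩ := mem_offDiag.1 hp
        exact pauliDot_anticomm (hvT _ hj) (hvT _ hk) hjk
    have hswap := sum_offDiag_swap T fun p => pauliDot n v p.1 * pauliDot n v p.2
    simp only [Prod.fst_swap, Prod.snd_swap] at hswap
    rw [sum_add_distrib, hswap, ← two_smul ℂ, ← smul_sum] at hsym
    exact smul_right_injective _ two_ne_zero hsym
  rw [sum_mul_sum, ← sum_product', ← diag_union_offDiag, sum_union (disjoint_diag_offDiag T),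
    sum_diag, hdiag, hoff]

theorem neg_card_sub_two_le_energy_sum_pauliDot {v : Fin n} {T : Finset (Fin n)} (hv : v ∉ T)
    {ψ : (Fin n → Fin 2) → ℂ} (hψ : ∑ x, ‖ψ x‖ ^ 2 = 1) :
    -((#T : ℝ) + 2) ≤ energy (∑ j ∈ T, pauliDot n v j) ψ := by
  have hherm : (∑ j ∈ T, pauliDot n v j).IsHermitian :=
    isHermitian_iff_isSelfAdjoint.2 <| isSelfAdjoint_sum _ fun j hj =>
      isHermitian_iff_isSelfAdjoint.1 (pauliDot_isHermitian fun h => hv (h ▸ hj))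
  have hoff : ∑ p ∈ T.offDiag, energy (pauliDot n p.1 p.2) ψ ≤ (#T : ℝ) * #T - #T := by
    calc ∑ p ∈ T.offDiag, energy (pauliDot n p.1 p.2) ψ
        ≤ ∑ p ∈ T.offDiag, (1 : ℝ) :=
          sum_le_sum fun p hp => energy_pauliDot_le (mem_offDiag.1 hp).2.2 hψ
      _ = (#T : ℝ) * #T - #T := by
          rw [sum_const, offDiag_card, nsmul_one, Nat.cast_sub (Nat.le_mul_self _), Nat.cast_mul]
  have hvar := sq_energy_le_energy_mul_self hherm hψ
  rw [sum_pauliDot_mul_self hv, energy_add, energy_sub, energy_nsmul, energy_nsmul, energy_one,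
    hψ, energy_sum (T.offDiag)] at hvar
  push_cast at hvar
  -- `c² ≤ 3t - 2c + (t² - t)`, i.e. `(c + 1)² ≤ (t + 1)²`
  nlinarith [(#T).cast_nonneg (α := ℝ)]

theorem energy_sum_hTerm_le {v : Fin n} {T : Finset (Fin n)} (hv : v ∉ T)
    {ψ : (Fin n → Fin 2) → ℂ} (hψ : ∑ x, ‖ψ x‖ ^ 2 = 1) :
    ∑ j ∈ T, energy (hTerm n v j) ψ ≤ #T + 1 := by
  have h := neg_card_sub_two_le_energy_sum_pauliDot hv hψ
  rw [energy_sum] at h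
  simp only [energy_hTerm _ _ hψ, ← sum_div, sum_sub_distrib, sum_const, nsmul_one]
  linarith

theorem energy_sum_smul_hTerm_le {v : Fin n} {T : Finset (Fin n)} (hv : v ∉ T) (ω : Fin n → ℝ)
    (hω : ∀ j ∈ T, 0 ≤ ω j) {ψ : (Fin n → Fin 2) → ℂ} (hψ : ∑ x, ‖ψ x‖ ^ 2 = 1) :
    energy (∑ j ∈ T, (ω j : ℂ) • hTerm n v j) ψ ≤ ∑ j ∈ T, ω j + T.fold max 0 ω := by
  have h := sum_mul_le_fold_max (fun j => energy (hTerm n v j) ψ - 1) T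
    (fun S hS => by
      have := energy_sum_hTerm_le (fun h => hv (hS h)) hψ
      rw [sum_sub_distrib, sum_const, nsmul_one]
      linarith) ω hω
  simp only [mul_sub, mul_one, sum_sub_distrib] at h
  simp only [energy_sum, energy_ofReal_smul]
  linarith

end StarBound

section Cut

variable {n : ℕ} (G : SimpleGraph (Fin n)) [DecidableRel G.Adj] (w : Fin n → Fin n → ℝ)

def cutValue (z : Fin n → Fin 2) : ℝ :=
  (1 / 2) * ∑ i, ∑ j, if G.Adj i j ∧ z i ≠ z j then w i j else 0

def cutHam (P : Matrix (Fin 2) (Fin 2) ℂ) : Matrix (Fin n → Fin 2) (Fin n → Fin 2) ℂ :=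
  (1 / 2 : ℂ) • ∑ i, ∑ j,
    if G.Adj i j then (w i j : ℂ) • ((1 / 2 : ℂ) • (1 - pauliAt n i P * pauliAt n j P)) else 0

theorem sum_cutHam_pauli : ∑ a, cutHam G w (pauli a) = hamG n G w + (totalW n G w : ℂ) • 1 := by
  have hterm : ∀ i j, ∑ a, (if G.Adj i j then
      (w i j : ℂ) • ((1 / 2 : ℂ) • (1 - pauliAt n i (pauli a) * pauliAt n j (pauli a))) else 0)
      = (if G.Adj i j then (w i j : ℂ) • hTerm n i j else 0)
        + (if G.Adj i j then (w i j : ℂ) else 0) • 1 := fun i j => by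
    split_ifs
    · simp only [hTerm, Fin.sum_univ_three, pauli, cons_val_zero, cons_val_one, cons_val_two,
        tail_cons, head_cons]
      module
    · simp
  calc ∑ a, cutHam G w (pauli a)
      = (1 / 2 : ℂ) • ∑ i, ∑ j, ∑ a, (if G.Adj i j then
          (w i j : ℂ) • ((1 / 2 : ℂ) • (1 - pauliAt n i (pauli a) * pauliAt n j (pauli a)))
          else 0) := by
        simp only [cutHam, ← smul_sum]
        rw [sum_comm]
        exact congrArg _ (sum_congr rfl fun i _ => sum_comm)
    _ = (1 / 2 : ℂ) • ∑ i, ∑ j, ((if G.Adj i j then (w i j : ℂ) • hTerm n i j else 0)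
          + (if G.Adj i j then (w i j : ℂ) else 0) • 1) := by simp only [hterm]
    _ = hamG n G w + (totalW n G w : ℂ) • 1 := by
        rw [hamG, totalW, Complex.ofReal_mul, mul_smul]
        simp only [sum_add_distrib, smul_add, ← sum_smul, Complex.ofReal_sum,
          apply_ite Complex.ofReal, Complex.ofReal_zero]
        norm_num

theorem cutHam_PZ : cutHam G w PZ = diagonal fun z => (cutValue G w z : ℂ) := by
  have hZZ : ∀ i j : Fin n, (1 / 2 : ℂ) • (1 - pauliAt n i PZ * pauliAt n j PZ)
      = diagonal fun x => if x i ≠ x j then 1 else 0 := fun i j => by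
    rw [PZ_eq_diagonal, pauliAt_diagonal, pauliAt_diagonal, diagonal_mul_diagonal, ← diagonal_one,
      diagonal_sub, ← diagonal_smul]
    have hsign : ∀ a b : Fin 2,
        (1 / 2 : ℂ) * (1 - ![1, -1] a * ![1, -1] b) = if a ≠ b then 1 else 0 := by
      intro a b; fin_cases a <;> fin_cases b <;> norm_num
    congr 1
    funext x
    exact hsign (x i) (x j)
  have hterm : ∀ i j : Fin n, (if G.Adj i j then
      (w i j : ℂ) • ((1 / 2 : ℂ) • (1 - pauliAt n i PZ * pauliAt n j PZ)) else 0)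
      = diagonal fun x => ((if G.Adj i j ∧ x i ≠ x j then w i j else 0 : ℝ) : ℂ) := fun i j => by
    rw [hZZ, ← diagonal_smul]
    split_ifs with h
    · congr 1; funext x; simp [h, apply_ite Complex.ofReal]
    · simp [h]
  ext x y
  simp only [cutHam, hterm, Matrix.smul_apply, Matrix.sum_apply, diagonal_apply]
  by_cases hxy : x = y
  · simp [hxy, cutValue]
  · simp [hxy]

theorem tensorOp_conj_cutHam {u : Matrix (Fin 2) (Fin 2) ℂ} (hu : u ∈ unitary _)
    (P : Matrix (Fin 2) (Fin 2) ℂ) :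
    tensorOp (fun _ : Fin n => u) * cutHam G w P * star (tensorOp fun _ : Fin n => u)
      = cutHam G w (u * P * star u) := by
  have hU := tensorOp_mem_unitary fun _ : Fin n => hu
  rw [← Unitary.conjStarAlgAut_apply (S := ℂ) ⟨_, hU⟩]
  simp only [cutHam, map_smul, map_sum, apply_ite (Unitary.conjStarAlgAut ℂ _ ⟨_, hU⟩), map_zero,
    map_sub, map_one, map_mul, Unitary.conjStarAlgAut_apply, tensorOp_const_conj_pauliAt hu]

theorem energy_cutHam_pauli_le (a : Fin 3) {M : ℝ} (hM : ∀ z, cutValue G w z ≤ M)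
    {ψ : (Fin n → Fin 2) → ℂ} (hψ : ∑ x, ‖ψ x‖ ^ 2 = 1) :
    energy (cutHam G w (pauli a)) ψ ≤ M := by
  obtain ⟨u, hu, hconj⟩ := exists_unitary_conj_PZ a
  have hU := tensorOp_mem_unitary fun _ : Fin n => hu
  rw [← hconj, ← tensorOp_conj_cutHam G w hu, star_eq_conjTranspose, energy_conj, cutHam_PZ,
    energy_diagonal]
  set φ := (tensorOp fun _ : Fin n => u)ᴴ *ᵥ ψ
  have hφ : ∑ x, ‖φ x‖ ^ 2 = 1 :=
    (sum_norm_sq_conjTranspose_mulVec (Unitary.mul_star_self_of_mem hU) ψ).trans hψ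
  calc ∑ x, cutValue G w x * ‖φ x‖ ^ 2 ≤ ∑ x, M * ‖φ x‖ ^ 2 :=
        sum_le_sum fun x _ => mul_le_mul_of_nonneg_right (hM x) (by positivity)
    _ = M := by rw [← mul_sum, hφ, mul_one]

theorem energy_hamG_le_three_mul_sub {M : ℝ} (hM : ∀ z, cutValue G w z ≤ M)
    {ψ : (Fin n → Fin 2) → ℂ} (hψ : ∑ x, ‖ψ x‖ ^ 2 = 1) :
    energy (hamG n G w) ψ ≤ 3 * M - totalW n G w := by
  have h := congrArg (energy · ψ) (sum_cutHam_pauli G w)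
  simp only [energy_sum, energy_add, energy_ofReal_smul, energy_one, hψ, mul_one] at h
  have := sum_le_sum fun a (_ : a ∈ univ) => energy_cutHam_pauli_le G w a hM hψ
  simp only [sum_const, card_univ, Fintype.card_fin, nsmul_eq_mul, Nat.cast_ofNat] at this
  linarith

theorem hTerm_apply_self {i j : Fin n} (hij : i ≠ j) (z : Fin n → Fin 2) :
    hTerm n i j z z = if z i ≠ z j then 1 else 0 := by
  simp only [hTerm, Matrix.smul_apply, Matrix.sub_apply, one_apply_eq,
    pauliAt_mul_pauliAt_apply_self hij, smul_eq_mul]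
  generalize z i = a
  generalize z j = b
  fin_cases a <;> fin_cases b <;> norm_num [PX, PY, PZ]

theorem hamG_apply_self (z : Fin n → Fin 2) : hamG n G w z z = cutValue G w z := by
  simp only [hamG, cutValue, Matrix.smul_apply, Matrix.sum_apply]
  push_cast
  rw [smul_eq_mul]
  congr 1
  refine sum_congr rfl fun i _ => sum_congr rfl fun j _ => ?_
  by_cases h : G.Adj i j
  · simp [h, hTerm_apply_self (G.ne_of_adj h), apply_ite Complex.ofReal]
  · simp [h]

theorem cutValue_le_PRODval (z : Fin n → Fin 2) : cutValue G w z ≤ PRODval n G w := by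
  obtain ⟨M, hM⟩ := (Set.finite_range (cutValue G w)).bddAbove
  have hbasis : (fun x => ∏ i, (Pi.single (z i) 1 : Fin 2 → ℂ) (x i)) = Pi.single z 1 := by
    funext x
    simp [Pi.single_apply, prod_ite_zero, funext_iff]
  refine le_csSup ⟨3 * M - totalW n G w, ?_⟩ ⟨fun i => Pi.single (z i) 1, fun i => ?_, ?_⟩
  · rintro r ⟨f, hf, rfl⟩
    exact energy_hamG_le_three_mul_sub G w (fun z => hM ⟨z, rfl⟩) (Fintype.sum_norm_sq_prod f hf)
  · simp [Pi.single_apply, apply_ite]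
  · rw [hbasis, energy_single, hamG_apply_self, Complex.ofReal_re]

theorem OPTval_le_three_mul_PRODval_sub : OPTval n G w ≤ 3 * PRODval n G w - totalW n G w :=
  maxEig_le fun _ hψ => energy_hamG_le_three_mul_sub G w (cutValue_le_PRODval G w) hψ

end Cut

section Star

variable {n : ℕ} (G : SimpleGraph (Fin n)) [DecidableRel G.Adj] (w : Fin n → Fin n → ℝ)

theorem energy_hamG_le_totalW_add (hnn : ∀ i j, 0 ≤ w i j) {ψ : (Fin n → Fin 2) → ℂ}
    (hψ : ∑ x, ‖ψ x‖ ^ 2 = 1) :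
    energy (hamG n G w) ψ ≤ totalW n G w + (∑ v, maxIncident n G w v) / 2 := by
  have hstar : ∀ v, energy (∑ j, if G.Adj v j then (w v j : ℂ) • hTerm n v j else 0) ψ
      ≤ (∑ j, if G.Adj v j then w v j else 0) + maxIncident n G w v := fun v => by
    rw [← sum_filter, ← sum_filter]
    exact energy_sum_smul_hTerm_le (by simp) (w v) (fun j _ => hnn v j) hψ
  rw [hamG, show (1 / 2 : ℂ) = ((1 / 2 : ℝ) : ℂ) by norm_num, energy_ofReal_smul, energy_sum,
    totalW]
  have := sum_le_sum fun v (_ : v ∈ univ) => hstar v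
  rw [sum_add_distrib] at this
  linarith

theorem OPTval_le_totalW_add (hnn : ∀ i j, 0 ≤ w i j) :
    OPTval n G w ≤ totalW n G w + (∑ v, maxIncident n G w v) / 2 :=
  maxEig_le fun _ hψ => energy_hamG_le_totalW_add G w hnn hψ

end Star

theorem prod_ratio_weighted_general (n : ℕ) (G : SimpleGraph (Fin n)) [DecidableRel G.Adj]
    (w : Fin n → Fin n → ℝ) (hnn : ∀ i j, 0 ≤ w i j) :
    PRODval n G w ≥
      (1 / 3 + 2 / 3 * (totalW n G w /
          (2 * totalW n G w + ∑ v, maxIncident n G w v))) * OPTval n G w := by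
  have hcut := OPTval_le_three_mul_PRODval_sub G w
  have hstar := OPTval_le_totalW_add G w hnn
  have hW : 0 ≤ totalW n G w :=
    mul_nonneg (by norm_num) (sum_nonneg fun i _ => sum_nonneg fun j _ => by
      split_ifs <;> simp [hnn])
  have hS : 0 ≤ ∑ v, maxIncident n G w v :=
    sum_nonneg fun v _ => (le_fold_max _).2 (Or.inl le_rfl)
  set W := totalW n G w
  set S := ∑ v, maxIncident n G w v
  have hr : 0 ≤ W / (2 * W + S) := by positivity
  have hrW : W / (2 * W + S) * (2 * W + S) = W := div_mul_cancel_of_imp fun h => by linarith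
  nlinarith [mul_le_mul_of_nonneg_left hstar hr]

/-- For a weighted graph `G` with nonnegative edge weights and total
weight `W = ∑_{e∈E} w_e > 0`,
`PROD(G) ≥ (1/3 + (2/3)·W/(2W + ∑_{v∈V} max_{e∋v} w_e)) · OPT(G)`. -/
theorem prod_ratio_weighted (n : ℕ) (G : SimpleGraph (Fin n)) [DecidableRel G.Adj]
    (w : Fin n → Fin n → ℝ) (hsym : ∀ i j, w i j = w j i) (hnn : ∀ i j, 0 ≤ w i j)
    (hW : 0 < totalW n G w) :
    PRODval n G w ≥
      (1 / 3 + 2 / 3 * (totalW n G w /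
          (2 * totalW n G w + ∑ v, maxIncident n G w v))) * OPTval n G w :=
  prod_ratio_weighted_general n G w hnn
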